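/- arXiv:2409.02318 — 2 statements merged into one kernel-verified Lean document; each statement's English description precedes it below -/
import Mathlib

section
/- Let f : ℝ^d → ℝ^d be continuous, let μ be an f-invariant ergodic Borel probability measure with compact support X, let U₁, …, U_m be a finite measurable partition of X with μ(U_j) > 0 for every j, and let P be the m×m matrix P_{ij} = μ(U_j ∩ f^{-1}(U_i)) / μ(U_j). Then the vector π with π_j = μ(U_j) is the unique probability vector fixed by P: if q ∈ ℝ^m has non-negative entries with ∑_j q_j = 1 and ∑_{j=1}^m P_{ij} q_j = q_i for all i, then q = π. -/
open MeasureTheory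

/-- For an ergodic invariant measure, the vector `π_j = μ(U_j)` is the unique
probability vector fixed by the transition matrix `P_{ij} = μ(U_j ∩ f⁻¹(U_i)) / μ(U_j)`. -/
theorem stationary_vector_unique
    {d : ℕ} (f : EuclideanSpace ℝ (Fin d) → EuclideanSpace ℝ (Fin d))
    (hf : Continuous f)
    (μ : Measure (EuclideanSpace ℝ (Fin d))) [IsProbabilityMeasure μ]
    (hinv : Measure.map f μ = μ)
    (hergodic : ∀ A : Set (EuclideanSpace ℝ (Fin d)), MeasurableSet A → f ⁻¹' A = A →
      μ A = 0 ∨ μ A = 1)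
    (X : Set (EuclideanSpace ℝ (Fin d)))
    (hX_supp : X = {x | ∀ V ∈ nhds x, 0 < μ V})
    (hX_cpt : IsCompact X)
    (m : ℕ) (U : Fin m → Set (EuclideanSpace ℝ (Fin d)))
    (hU_meas : ∀ j, MeasurableSet (U j))
    (hU_disj : Pairwise (Function.onFun Disjoint U))
    (hU_cover : (⋃ j, U j) = X)
    (hU_pos : ∀ j, 0 < μ (U j))
    (P : Fin m → Fin m → ℝ)
    (hP : ∀ i j, P i j = (μ (U j ∩ f ⁻¹' (U i))).toReal / (μ (U j)).toReal)
    (q : Fin m → ℝ)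
    (hq_nonneg : ∀ j, 0 ≤ q j)
    (hq_sum : ∑ j, q j = 1)
    (hq_fixed : ∀ i, ∑ j, P i j * q j = q i) :
    ∀ j, q j = (μ (U j)).toReal := by
  have hfm : Measurable f := hf.measurable
  have hmp : MeasurePreserving f μ μ := ⟨hfm, hinv⟩
  have herg : Ergodic f μ := by
    refine ⟨hmp, ⟨fun s hs hfs => ?_⟩⟩
    rw [Filter.eventuallyConst_set']
    rcases hergodic s hs hfs with h | h
    · exact Or.inl (ae_eq_empty.2 h)
    · exact Or.inr (ae_eq_univ.2 (by rw [prob_compl_eq_zero_iff hs]; exact h))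
  -- the complement of the support is null
  have hXc : μ Xᶜ = 0 := by
    obtain ⟨T, hTc, hTsub, hTU⟩ := TopologicalSpace.isOpen_sUnion_countable
      {O | IsOpen O ∧ μ O = 0} (fun O hO => hO.1)
    have hsub : Xᶜ ⊆ ⋃₀ T := by
      rw [hTU]
      intro x hx
      rw [hX_supp] at hx
      simp only [Set.mem_compl_iff, Set.mem_setOf_eq, not_forall] at hx
      obtain ⟨V, hV, hVpos⟩ := hx
      have hV0 : μ V = 0 := le_antisymm (not_lt.1 hVpos) bot_le
      exact ⟨interior V, ⟨isOpen_interior, measure_mono_null interior_subset hV0⟩,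
        mem_interior_iff_mem_nhds.2 hV⟩
    exact measure_mono_null hsub ((measure_sUnion_null_iff hTc).2 (fun s hs => (hTsub hs).2))
  have hXmeas : MeasurableSet X := hX_cpt.isClosed.measurableSet
  have hX1 : μ X = 1 := by
    have h := measure_add_measure_compl hXmeas (μ := μ)
    rw [hXc, add_zero, measure_univ] at h
    exact h
  -- notation
  set π : Fin m → ℝ := fun j => (μ (U j)).toReal with hπ
  have hπ_pos : ∀ j, 0 < π j := fun j =>
    ENNReal.toReal_pos (hU_pos j).ne' (measure_ne_top μ _)
  set a : Fin m → Fin m → ℝ := fun i j => (μ (U j ∩ f ⁻¹' (U i))).toReal with ha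
  have ha_nonneg : ∀ i j, 0 ≤ a i j := fun i j => ENNReal.toReal_nonneg
  -- row sums
  have hrowE : ∀ i, μ (U i) = ∑ j, μ (U j ∩ f ⁻¹' (U i)) := by
    intro i
    have h1 : μ (f ⁻¹' (U i)) = μ (U i) :=
      hmp.measure_preimage (hU_meas i).nullMeasurableSet
    have hUX : MeasurableSet (⋃ j, U j) := MeasurableSet.iUnion hU_meas
    have h2 : μ (f ⁻¹' (U i) \ ⋃ j, U j) = 0 := by
      apply measure_mono_null _ hXc
      rw [hU_cover]
      exact Set.diff_subset_compl _ _ |>.trans (le_refl _)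
    have h3 := measure_inter_add_diff (μ := μ) (f ⁻¹' (U i)) hUX
    rw [h2, add_zero] at h3
    have h4 : f ⁻¹' (U i) ∩ ⋃ j, U j = ⋃ j, (U j ∩ f ⁻¹' (U i)) := by
      rw [Set.inter_comm, Set.iUnion_inter]
    have h5 : μ (⋃ j, (U j ∩ f ⁻¹' (U i))) = ∑' j, μ (U j ∩ f ⁻¹' (U i)) := by
      apply measure_iUnion
      · intro j k hjk
        exact (hU_disj hjk).mono Set.inter_subset_left Set.inter_subset_left
      · exact fun j => (hU_meas j).inter (hfm (hU_meas i))
    rw [← h1, ← h3, h4, h5, tsum_fintype]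
  have hrow : ∀ i, π i = ∑ j, a i j := by
    intro i
    rw [hπ, ha]
    simp only
    rw [hrowE i, ENNReal.toReal_sum (fun j _ => measure_ne_top μ _)]
  -- sum of π is 1
  have hπ_sum : ∑ j, π j = 1 := by
    have h5 : μ (⋃ j, U j) = ∑' j, μ (U j) :=
      measure_iUnion hU_disj hU_meas
    rw [hU_cover, hX1, tsum_fintype] at h5
    have := congrArg ENNReal.toReal h5
    rw [ENNReal.toReal_one, ENNReal.toReal_sum (fun j _ => measure_ne_top μ _)] at this
    exact this.symm
  -- nonempty index
  have hm : 0 < m := by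
    rcases Nat.eq_zero_or_pos m with h | h
    · subst h; simp at hq_sum
    · exact h
  haveI : Nonempty (Fin m) := ⟨⟨0, hm⟩⟩
  set r : Fin m → ℝ := fun j => q j / π j with hr
  obtain ⟨j₀, -, hj₀⟩ := Finset.exists_max_image Finset.univ r ⟨⟨0, hm⟩, Finset.mem_univ _⟩
  set c : ℝ := r j₀ with hc
  have hr_le : ∀ j, r j ≤ c := fun j => hj₀ j (Finset.mem_univ j)
  have hq_eq : ∀ j, q j = r j * π j := by
    intro j
    rw [hr]
    show q j = q j / π j * π j
    rw [div_mul_cancel₀ _ (hπ_pos j).ne']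
  -- the fixed point equation in terms of a and r
  have hfix : ∀ i, ∑ j, a i j * r j = q i := by
    intro i
    rw [← hq_fixed i]
    apply Finset.sum_congr rfl
    intro j _
    rw [hP i j, hr]
    show a i j * (q j / π j) = (a i j / π j) * q j
    ring
  -- main claim: if r i = c then a i j = 0 for all j with r j ≠ c
  have hkey : ∀ i, r i = c → ∀ j, r j ≠ c → a i j = 0 := by
    intro i hi
    have hsum0 : ∑ j, a i j * (c - r j) = 0 := by
      have : ∑ j, a i j * (c - r j) = c * (∑ j, a i j) - ∑ j, a i j * r j := by
        rw [Finset.mul_sum, ← Finset.sum_sub_distrib]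
        apply Finset.sum_congr rfl; intro j _; ring
      rw [this, hfix i, ← hrow i, hq_eq i, hi]
      ring
    have hterm : ∀ j ∈ Finset.univ, a i j * (c - r j) = 0 :=
      (Finset.sum_eq_zero_iff_of_nonneg (fun j _ =>
        mul_nonneg (ha_nonneg i j) (sub_nonneg.2 (hr_le j)))).1 hsum0
    intro j hj
    have := hterm j (Finset.mem_univ j)
    rcases mul_eq_zero.1 this with h | h
    · exact h
    · exact absurd (by linarith [sub_eq_zero.1 h] : r j = c) hj
  -- null measure version
  have hkeyE : ∀ i, r i = c → ∀ j, r j ≠ c → μ (U j ∩ f ⁻¹' (U i)) = 0 := by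
    intro i hi j hj
    have := hkey i hi j hj
    rw [ha] at this
    simpa [ENNReal.toReal_eq_zero_iff, measure_ne_top μ _] using this
  -- the invariant set
  set A : Set (EuclideanSpace ℝ (Fin d)) := ⋃ (i : Fin m) (_ : r i = c), U i with hA
  have hAmeas : MeasurableSet A := MeasurableSet.iUnion (fun i =>
    MeasurableSet.iUnion (fun _ => hU_meas i))
  have hApre : μ (f ⁻¹' A \ A) = 0 := by
    have hsub : f ⁻¹' A \ A ⊆ Xᶜ ∪ ⋃ (j : Fin m) (_ : r j ≠ c) (i : Fin m) (_ : r i = c),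
        (U j ∩ f ⁻¹' (U i)) := by
      rintro x ⟨hx1, hx2⟩
      by_cases hxX : x ∈ X
      · right
        rw [← hU_cover] at hxX
        obtain ⟨j, hj⟩ := Set.mem_iUnion.1 hxX
        have hjc : r j ≠ c := by
          intro hrj
          exact hx2 (Set.mem_iUnion.2 ⟨j, Set.mem_iUnion.2 ⟨hrj, hj⟩⟩)
        obtain ⟨i, hi⟩ := Set.mem_iUnion.1 hx1
        obtain ⟨hic, hxi⟩ := Set.mem_iUnion.1 hi
        exact Set.mem_iUnion.2 ⟨j, Set.mem_iUnion.2 ⟨hjc, Set.mem_iUnion.2 ⟨i,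
          Set.mem_iUnion.2 ⟨hic, ⟨hj, hxi⟩⟩⟩⟩⟩
      · left; exact hxX
    apply measure_mono_null hsub
    apply measure_union_null hXc
    refine measure_iUnion_null fun j => measure_iUnion_null fun hj =>
      measure_iUnion_null fun i => measure_iUnion_null fun hi => ?_
    exact hkeyE i hi j hj
  have hAle : f ⁻¹' A ≤ᵐ[μ] A := ae_le_set.2 hApre
  have hA01 := herg.ae_empty_or_univ_of_preimage_ae_le' hAmeas.nullMeasurableSet hAle
    (measure_ne_top μ A)
  have hA1 : μ A = 1 := by
    rcases hA01 with h | h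
    · exfalso
      have hsub : U j₀ ⊆ A :=
        Set.subset_iUnion₂ (s := fun i (_ : r i = c) => U i) j₀ rfl
      have h0 : μ (U j₀) = 0 := measure_mono_null hsub (ae_eq_empty.1 h)
      exact (hU_pos j₀).ne' h0
    · rw [measure_congr h, measure_univ]
  have hrc : ∀ i, r i = c := by
    intro i
    by_contra hic
    have hdis : U i ⊆ Aᶜ := by
      intro x hx hxA
      obtain ⟨k, hk⟩ := Set.mem_iUnion.1 hxA
      obtain ⟨hkc, hxk⟩ := Set.mem_iUnion.1 hk
      have hki : k ≠ i := fun h => hic (h ▸ hkc)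
      exact Set.disjoint_left.1 (hU_disj hki) hxk hx
    have hAc : μ Aᶜ = 0 := (prob_compl_eq_zero_iff hAmeas).2 hA1
    exact (hU_pos i).ne' (measure_mono_null hdis hAc)
  have hc1 : c = 1 := by
    have h : ∑ j, q j = c * ∑ j, π j := by
      rw [Finset.mul_sum]
      exact Finset.sum_congr rfl (fun j _ => by rw [hq_eq j, hrc j])
    rw [hq_sum, hπ_sum, mul_one] at h
    exact h.symm
  intro j
  rw [hq_eq j, hrc j, hc1, one_mul]
end

section
/- Let f : ℝ^d → ℝ^d be continuous, let μ be an f-invariant ergodic Borel probability measure with compact support X, and let U₁, …, U_m be a finite measurable partition of X with μ(U_j) > 0 for every j. For each pair (j,i) let φ_{j→i} : ℝ^d → ℝ^d be measurable with range contained in U_i and φ_{j→i} = f μ-a.e. on U_j ∩ f^{-1}(U_i), and let G be the Markov kernel on X given for y ∈ U_j by G(y) = ∑_{i=1}^m P_{ij} δ_{φ_{j→i}(y)}, where P_{ij} = μ(U_j ∩ f^{-1}(U_i)) / μ(U_j). Then every probability measure μ_δ on X that is stationary for G satisfies μ_δ(U_j) = μ(U_j) for every j = 1, …, m. -/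
/-!
Both `μ` and a stationary `μδ` have cell-mass vectors fixed by the nonnegative transition matrix
`P`, the first one strictly positive. Ergodicity makes `P` irreducible: if a set `Z` of indices is
closed under `i ∈ Z, 0 < P i k ⇒ k ∈ Z`, the union `S` of its cells satisfies `f ⁻¹' S ⊆ S` up to
a null set, so `S` is null or conull. Subtracting from a fixed vector the largest multiple of the
positive one that keeps it nonnegative leaves a nonnegative fixed vector with a zero entry; its
zero set is closed, hence everything. Both mass vectors sum to one, so they coincide.
-/

open MeasureTheory Finset
open scoped ENNReal

namespace Matrix

variable {ι : Type*} [Fintype ι] {P : Matrix ι ι ℝ}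

theorem eq_zero_of_mulVec_eq_self_of_pos (hP : ∀ i k, 0 ≤ P i k) {t : ι → ℝ} (ht : 0 ≤ t)
    (hPt : P *ᵥ t = t) {i k : ι} (hi : t i = 0) (hik : 0 < P i k) : t k = 0 := by
  have hsum : ∑ l, P i l * t l = 0 := hi ▸ congrFun hPt i
  have hterm := (sum_eq_zero_iff_of_nonneg fun l _ => mul_nonneg (hP i l) (ht l)).1 hsum k
    (mem_univ k)
  exact (mul_eq_zero.1 hterm).resolve_left hik.ne'

theorem exists_eq_smul_of_mulVec_eq_self (hP : ∀ i k, 0 ≤ P i k) {q v : ι → ℝ}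
    (hq : ∀ k, 0 < q k) (hPq : P *ᵥ q = q) (hPv : P *ᵥ v = v)
    (hirr : ∀ Z : Set ι, Z.Nonempty → (∀ i ∈ Z, ∀ k, 0 < P i k → k ∈ Z) → Z = Set.univ) :
    ∃ r : ℝ, v = r • q := by
  cases isEmpty_or_nonempty ι
  · exact ⟨0, Subsingleton.elim _ _⟩
  obtain ⟨j, hj⟩ := Finite.exists_min fun k => v k / q k
  set r := v j / q j
  set t := v - r • q
  have ht : 0 ≤ t := fun k => sub_nonneg.2 ((le_div_iff₀ (hq k)).1 (hj k))
  have hPt : P *ᵥ t = t := by rw [mulVec_sub, mulVec_smul, hPq, hPv]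
  have htj : t j = 0 := by simp [t, r, div_mul_cancel₀ _ (hq j).ne']
  have hZ := hirr {k | t k = 0} ⟨j, htj⟩ fun i hi k hik =>
    eq_zero_of_mulVec_eq_self_of_pos hP ht hPt hi hik
  exact ⟨r, funext fun k => sub_eq_zero.1 (hZ ▸ Set.mem_univ k : k ∈ {k | t k = 0})⟩

theorem eq_of_mulVec_eq_self_of_sum_eq (hP : ∀ i k, 0 ≤ P i k) {q v : ι → ℝ}
    (hq : ∀ k, 0 < q k) (hPq : P *ᵥ q = q) (hPv : P *ᵥ v = v) (hsum : ∑ k, v k = ∑ k, q k)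
    (hirr : ∀ Z : Set ι, Z.Nonempty → (∀ i ∈ Z, ∀ k, 0 < P i k → k ∈ Z) → Z = Set.univ) :
    v = q := by
  obtain ⟨r, rfl⟩ := exists_eq_smul_of_mulVec_eq_self hP hq hPq hPv hirr
  cases isEmpty_or_nonempty ι
  · exact Subsingleton.elim _ _
  have hq_sum : 0 < ∑ k, q k := sum_pos (fun k _ => hq k) univ_nonempty
  simp only [Pi.smul_apply, smul_eq_mul, ← mul_sum] at hsum
  rw [(mul_eq_right₀ hq_sum.ne').1 hsum, one_smul]

theorem mulVec_toReal_eq_self (hP : ∀ i k, 0 ≤ P i k) {y : ι → ℝ≥0∞} (hy : ∀ k, y k ≠ ∞)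
    (h : ∀ i, y i = ∑ k, ENNReal.ofReal (P i k) * y k) :
    P *ᵥ (fun k => (y k).toReal) = fun k => (y k).toReal := by
  funext i
  conv_rhs => rw [h i]
  rw [ENNReal.toReal_sum fun k _ => ENNReal.mul_ne_top ENNReal.ofReal_ne_top (hy k)]
  simp only [ENNReal.toReal_mul, ENNReal.toReal_ofReal (hP i _)]
  rfl

end Matrix

section Cells

variable {α ι : Type*} [MeasurableSpace α]

/-- `cellTransition f μ U i j` is the proportion of the cell `U j` that `f` maps into `U i`. -/
noncomputable def cellTransition (f : α → α) (μ : Measure α) (U : ι → Set α) : Matrix ι ι ℝ :=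
  Matrix.of fun i j => (μ (U j ∩ f ⁻¹' U i)).toReal / (μ (U j)).toReal

variable {f : α → α} {μ : Measure α} {U : ι → Set α}

theorem cellTransition_nonneg (i j : ι) : 0 ≤ cellTransition f μ U i j :=
  div_nonneg ENNReal.toReal_nonneg ENNReal.toReal_nonneg

theorem ofReal_cellTransition_mul [IsFiniteMeasure μ] {i j : ι} (hj : μ (U j) ≠ 0) :
    ENNReal.ofReal (cellTransition f μ U i j) * μ (U j) = μ (U j ∩ f ⁻¹' U i) := by
  rw [cellTransition, Matrix.of_apply, ← ENNReal.toReal_div,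
    ENNReal.ofReal_toReal (ENNReal.div_lt_top (measure_ne_top μ _) hj).ne,
    ENNReal.div_mul_cancel hj (measure_ne_top μ _)]

theorem cellTransition_pos [IsFiniteMeasure μ] {i j : ι} (h : 0 < μ (U j ∩ f ⁻¹' U i)) :
    0 < cellTransition f μ U i j := by
  have hj : μ (U j) ≠ 0 := (h.trans_le (measure_mono Set.inter_subset_left)).ne'
  refine (cellTransition_nonneg i j).lt_of_ne fun h0 => h.ne' ?_
  rw [← ofReal_cellTransition_mul hj, ← h0, ENNReal.ofReal_zero, zero_mul]

variable [Fintype ι]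

theorem sum_toReal_measure_eq_one {ν : Measure α} [IsProbabilityMeasure ν]
    (hU_meas : ∀ i, MeasurableSet (U i)) (hU_disj : Pairwise (Function.onFun Disjoint U))
    (hU_cover : ∀ᵐ x ∂ν, x ∈ ⋃ i, U i) :
    ∑ i, (ν (U i)).toReal = 1 := by
  rw [← ENNReal.toReal_sum fun i _ => measure_ne_top ν _, ← tsum_fintype (L := .unconditional _),
    ← measure_iUnion hU_disj hU_meas,
    (prob_compl_eq_zero_iff (MeasurableSet.iUnion hU_meas)).1 hU_cover, ENNReal.toReal_one]

theorem sum_smul_dirac_apply_of_mem (hU_meas : ∀ i, MeasurableSet (U i))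
    (hU_disj : Pairwise (Function.onFun Disjoint U)) (w : ι → ℝ≥0∞) {x : ι → α}
    (hx : ∀ i, x i ∈ U i) (j : ι) :
    (∑ i, w i • Measure.dirac (x i)) (U j) = w j := by
  classical
  have hind : ∀ i, (U j).indicator 1 (x i) = if i = j then (1 : ℝ≥0∞) else 0 := by
    intro i
    split_ifs with h
    · subst h; exact Set.indicator_of_mem (hx i) 1
    · exact Set.indicator_of_notMem (Set.disjoint_left.1 (hU_disj h) (hx i)) 1
  simp [Measure.dirac_apply' _ (hU_meas j), hind]

theorem lintegral_comp_eq_sum_mul {ν : Measure α} (hU_meas : ∀ i, MeasurableSet (U i))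
    (hU_disj : Pairwise (Function.onFun Disjoint U)) (hU_cover : ∀ᵐ x ∂ν, x ∈ ⋃ i, U i)
    {c : α → ι} (hc : ∀ j, ∀ y ∈ U j, c y = j) (g : ι → ℝ≥0∞) :
    ∫⁻ y, g (c y) ∂ν = ∑ k, g k * ν (U k) := by
  conv_lhs => rw [← Measure.restrict_eq_self_of_ae_mem hU_cover]
  rw [lintegral_iUnion hU_meas hU_disj, tsum_fintype]
  refine sum_congr rfl fun k _ => ?_
  rw [setLIntegral_congr_fun (hU_meas k) fun y hy => by rw [hc k y hy], setLIntegral_const]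

theorem measure_cell_eq_sum_cellTransition [IsFiniteMeasure μ] (hf : MeasurePreserving f μ μ)
    (hU_meas : ∀ i, MeasurableSet (U i)) (hU_disj : Pairwise (Function.onFun Disjoint U))
    (hU_cover : ∀ᵐ x ∂μ, x ∈ ⋃ i, U i) (hU_pos : ∀ i, μ (U i) ≠ 0) (i : ι) :
    μ (U i) = ∑ k, ENNReal.ofReal (cellTransition f μ U i k) * μ (U k) := by
  simp_rw [ofReal_cellTransition_mul (hU_pos _)]
  have hdisj : Pairwise (Function.onFun Disjoint fun k => U k ∩ f ⁻¹' U i) :=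
    fun k l hkl => (hU_disj hkl).mono Set.inter_subset_left Set.inter_subset_left
  rw [← tsum_fintype (L := .unconditional _),
    ← measure_iUnion hdisj fun k => (hU_meas k).inter (hf.measurable (hU_meas i)),
    ← Set.iUnion_inter, Set.inter_comm, measure_inter_conull (t := ⋃ i, U i) hU_cover,
    hf.measure_preimage (hU_meas i).nullMeasurableSet]

theorem Ergodic.eq_univ_of_cells_closed [IsFiniteMeasure μ] (hf : Ergodic f μ)
    (hU_meas : ∀ i, MeasurableSet (U i))
    (hU_disj : Pairwise (Function.onFun Disjoint U)) (hU_cover : ∀ᵐ x ∂μ, x ∈ ⋃ i, U i)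
    (hU_pos : ∀ i, 0 < μ (U i)) {Z : Set ι} (hZ : Z.Nonempty)
    (hZ_closed : ∀ i ∈ Z, ∀ k, 0 < μ (U k ∩ f ⁻¹' U i) → k ∈ Z) : Z = Set.univ := by
  set S := ⋃ k ∈ Z, U k
  have hS : MeasurableSet S := MeasurableSet.biUnion Z.to_countable fun k _ => hU_meas k
  have hnull : ∀ᵐ x ∂μ, ∀ i ∈ Z, ∀ k ∈ Zᶜ, x ∉ U k ∩ f ⁻¹' U i := by
    refine (ae_ball_iff Z.to_countable).2 fun i hi => (ae_ball_iff Zᶜ.to_countable).2 fun k hk => ?_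
    refine measure_eq_zero_iff_ae_notMem.1 (by_contra fun h0 => hk ?_)
    exact hZ_closed i hi k (pos_iff_ne_zero.2 h0)
  have hfS : f ⁻¹' S ≤ᵐ[μ] S := by
    filter_upwards [hnull, hU_cover] with x hx hxU hfx
    obtain ⟨i, hi, hfxi⟩ := Set.mem_iUnion₂.1 hfx
    obtain ⟨k, hxk⟩ := Set.mem_iUnion.1 hxU
    by_cases hk : k ∈ Z
    · exact Set.mem_iUnion₂.2 ⟨k, hk, hxk⟩
    · exact absurd ⟨hxk, hfxi⟩ (hx i hi k hk)
  obtain ⟨j, hj⟩ := hZ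
  rcases hf.ae_empty_or_univ_of_preimage_ae_le hS.nullMeasurableSet hfS with h | h
  · have hS0 : μ S = 0 := ae_eq_empty.1 h
    exact absurd (measure_mono_null (Set.subset_biUnion_of_mem hj) hS0) (hU_pos j).ne'
  · refine Set.eq_univ_of_forall fun k => by_contra fun hk => (hU_pos k).ne' ?_
    refine measure_mono_null (fun x hx => Set.mem_compl fun hxS => ?_) (ae_eq_univ.1 h)
    obtain ⟨l, hl, hxl⟩ := Set.mem_iUnion₂.1 hxS
    exact Set.disjoint_left.1 (hU_disj fun hkl : k = l => hk (hkl ▸ hl)) hx hxl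

end Cells

theorem PreErgodic.of_prob_eq_zero_or_one {α : Type*} [MeasurableSpace α] {f : α → α}
    {μ : Measure α} [IsProbabilityMeasure μ]
    (h : ∀ s, MeasurableSet s → f ⁻¹' s = s → μ s = 0 ∨ μ s = 1) : PreErgodic f μ where
  aeconst_set s hs hfs := by
    rw [Filter.eventuallyConst_set', ae_eq_empty, ae_eq_univ, prob_compl_eq_zero_iff hs]
    exact h s hs hfs

theorem stationary_measure_cell_masses_general
    {d : ℕ} (f : EuclideanSpace ℝ (Fin d) → EuclideanSpace ℝ (Fin d))
    (hf : Continuous f)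
    (μ : Measure (EuclideanSpace ℝ (Fin d))) [IsProbabilityMeasure μ]
    (hinv : Measure.map f μ = μ)
    (hergodic : ∀ A : Set (EuclideanSpace ℝ (Fin d)), MeasurableSet A → f ⁻¹' A = A →
      μ A = 0 ∨ μ A = 1)
    (X : Set (EuclideanSpace ℝ (Fin d)))
    (hX_supp : X = {x | ∀ V ∈ nhds x, 0 < μ V})
    (m : ℕ) (U : Fin m → Set (EuclideanSpace ℝ (Fin d)))
    (hU_meas : ∀ j, MeasurableSet (U j))
    (hU_disj : Pairwise (Function.onFun Disjoint U))
    (hU_cover : (⋃ j, U j) = X)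
    (hU_pos : ∀ j, 0 < μ (U j))
    (P : Fin m → Fin m → ℝ)
    (hP : ∀ i j, P i j = (μ (U j ∩ f ⁻¹' (U i))).toReal / (μ (U j)).toReal)
    (φ : Fin m → Fin m → EuclideanSpace ℝ (Fin d) → EuclideanSpace ℝ (Fin d))
    (hφ_range : ∀ j i, Set.range (φ j i) ⊆ U i)
    -- the cell-index function: `c y = j` whenever `y ∈ U j` :
    (c : EuclideanSpace ℝ (Fin d) → Fin m)
    (hc : ∀ j, ∀ y ∈ U j, c y = j)
    -- the step-skew Markov kernel `G` :
    (G : EuclideanSpace ℝ (Fin d) → Measure (EuclideanSpace ℝ (Fin d)))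
    (hG : ∀ y, G y = ∑ i : Fin m, ENNReal.ofReal (P i (c y)) • Measure.dirac (φ (c y) i y))
    -- `μ_δ` : a stationary probability measure of `G`, concentrated on `X` :
    (μδ : Measure (EuclideanSpace ℝ (Fin d))) [IsProbabilityMeasure μδ]
    (hμδ_X : μδ X = 1)
    (hstat : ∀ A : Set (EuclideanSpace ℝ (Fin d)), MeasurableSet A →
      (∫⁻ y, G y A ∂μδ) = μδ A) :
    ∀ j, μδ (U j) = μ (U j) := by
  have hP : P = cellTransition f μ U := funext₂ hP
  subst hP
  have hX_meas : MeasurableSet X := hU_cover ▸ MeasurableSet.iUnion hU_meas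
  have hμ_cover : ∀ᵐ x ∂μ, x ∈ ⋃ j, U j := by
    rw [hU_cover, hX_supp]
    filter_upwards [Measure.support_mem_ae (μ := μ)] with x hx
    exact (Measure.mem_support_iff_forall x).1 hx
  have hμδ_cover : ∀ᵐ x ∂μδ, x ∈ ⋃ j, U j :=
    hU_cover ▸ (prob_compl_eq_zero_iff hX_meas).2 hμδ_X
  have hμ_erg : Ergodic f μ := ⟨⟨hf.measurable, hinv⟩, .of_prob_eq_zero_or_one hergodic⟩
  have hμδ_cell : ∀ i, μδ (U i) = ∑ k, ENNReal.ofReal (cellTransition f μ U i k) * μδ (U k) := by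
    intro i
    simp_rw [← hstat _ (hU_meas i), hG, sum_smul_dirac_apply_of_mem hU_meas hU_disj _
      (fun k => hφ_range _ k (Set.mem_range_self _))]
    exact lintegral_comp_eq_sum_mul hU_meas hU_disj hμδ_cover hc
      fun k => ENNReal.ofReal (cellTransition f μ U i k)
  have hμ_fixed := Matrix.mulVec_toReal_eq_self cellTransition_nonneg
    (fun k => measure_ne_top μ _) (measure_cell_eq_sum_cellTransition hμ_erg.toMeasurePreserving
      hU_meas hU_disj hμ_cover fun k => (hU_pos k).ne')
  have hμδ_fixed := Matrix.mulVec_toReal_eq_self cellTransition_nonneg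
    (fun k => measure_ne_top μδ _) hμδ_cell
  have hirr : ∀ Z : Set (Fin m), Z.Nonempty →
      (∀ i ∈ Z, ∀ k, 0 < cellTransition f μ U i k → k ∈ Z) → Z = Set.univ :=
    fun Z hZ hZ_closed => hμ_erg.eq_univ_of_cells_closed hU_meas hU_disj hμ_cover hU_pos hZ
      fun i hi k hk => hZ_closed i hi k (cellTransition_pos hk)
  have hmass := Matrix.eq_of_mulVec_eq_self_of_sum_eq cellTransition_nonneg
    (fun k => ENNReal.toReal_pos (hU_pos k).ne' (measure_ne_top μ _)) hμ_fixed hμδ_fixed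
    ((sum_toReal_measure_eq_one hU_meas hU_disj hμδ_cover).trans
      (sum_toReal_measure_eq_one hU_meas hU_disj hμ_cover).symm) hirr
  exact fun j => (ENNReal.toReal_eq_toReal_iff' (measure_ne_top _ _) (measure_ne_top _ _)).1
    (congrFun hmass j)

/-- Any stationary measure `μ_δ` of the step-skew Markov kernel `G` built from
a finite positive-measure partition of the support `X` assigns to each cell `U_j` the same
mass as the original invariant measure `μ`. -/
theorem stationary_measure_cell_masses
    {d : ℕ} (f : EuclideanSpace ℝ (Fin d) → EuclideanSpace ℝ (Fin d))
    (hf : Continuous f)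
    (μ : Measure (EuclideanSpace ℝ (Fin d))) [IsProbabilityMeasure μ]
    (hinv : Measure.map f μ = μ)
    (hergodic : ∀ A : Set (EuclideanSpace ℝ (Fin d)), MeasurableSet A → f ⁻¹' A = A →
      μ A = 0 ∨ μ A = 1)
    (X : Set (EuclideanSpace ℝ (Fin d)))
    (hX_supp : X = {x | ∀ V ∈ nhds x, 0 < μ V})
    (hX_cpt : IsCompact X)
    (m : ℕ) (U : Fin m → Set (EuclideanSpace ℝ (Fin d)))
    (hU_meas : ∀ j, MeasurableSet (U j))
    (hU_disj : Pairwise (Function.onFun Disjoint U))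
    (hU_cover : (⋃ j, U j) = X)
    (hU_pos : ∀ j, 0 < μ (U j))
    (P : Fin m → Fin m → ℝ)
    (hP : ∀ i j, P i j = (μ (U j ∩ f ⁻¹' (U i))).toReal / (μ (U j)).toReal)
    (φ : Fin m → Fin m → EuclideanSpace ℝ (Fin d) → EuclideanSpace ℝ (Fin d))
    (hφ_meas : ∀ j i, Measurable (φ j i))
    (hφ_range : ∀ j i, Set.range (φ j i) ⊆ U i)
    (hφ_ae : ∀ j i, ∀ᵐ x ∂(μ.restrict (U j ∩ f ⁻¹' (U i))), φ j i x = f x)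
    -- the cell-index function: `c y = j` whenever `y ∈ U j` :
    (c : EuclideanSpace ℝ (Fin d) → Fin m)
    (hc : ∀ j, ∀ y ∈ U j, c y = j)
    -- the step-skew Markov kernel `G` :
    (G : EuclideanSpace ℝ (Fin d) → Measure (EuclideanSpace ℝ (Fin d)))
    (hG : ∀ y, G y = ∑ i : Fin m, ENNReal.ofReal (P i (c y)) • Measure.dirac (φ (c y) i y))
    -- `μ_δ` : a stationary probability measure of `G`, concentrated on `X` :
    (μδ : Measure (EuclideanSpace ℝ (Fin d))) [IsProbabilityMeasure μδ]
    (hμδ_X : μδ X = 1)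
    (hstat : ∀ A : Set (EuclideanSpace ℝ (Fin d)), MeasurableSet A →
      (∫⁻ y, G y A ∂μδ) = μδ A) :
    ∀ j, μδ (U j) = μ (U j) :=
  stationary_measure_cell_masses_general f hf μ hinv hergodic X hX_supp m U hU_meas hU_disj hU_cover
    hU_pos P hP φ hφ_range c hc G hG μδ hμδ_X hstat
end
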